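/- arXiv:2002.03041 — 2 statements merged into one kernel-verified Lean document; each statement's English description precedes it below -/
import Mathlib

section
/- Let m ≥ 1 and let X ⊆ ℤ_{≥0}^m. Then the Newton polygon of the vertex set of X equals the Newton polygon of X: N(Vert(X)) = N(X). -/
/-!
A point `x ∈ X` is a vertex of `X` exactly when `emb x` is an extreme point of `N(X)`: `N(X)` is
the convex hull of the upper set `N(X \ {x})` and the orthant `emb x + ℝ_{≥0}^m`, and a point
outside a convex upper set is extreme in such a hull; conversely an extreme point of `N(X)`
must be a generator `emb (y + u)`, and `y = x` since otherwise it is the midpoint of `emb y`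
and `emb (y + 2u)`. By Dickson's lemma `N(X)` is generated by a finite subset of `X`; in an
inclusion-minimal one `S` every point is a vertex of `S`, hence extreme in `N(S) = N(X)`,
hence a vertex of `X`.
-/

open Pointwise

noncomputable section

/-- The embedding of `ℤ_{≥0}^m` into `ℝ^m`. -/
def emb {m : ℕ} (x : Fin m → ℕ) : Fin m → ℝ := fun i => (x i : ℝ)

/-- The Newton polygon of `X ⊆ ℤ_{≥0}^m`: the convex hull (in `ℝ^m`) of
`X + ℤ_{≥0}^m`. -/
def newton {m : ℕ} (X : Set (Fin m → ℕ)) : Set (Fin m → ℝ) :=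
  convexHull ℝ (emb '' (X + (Set.univ : Set (Fin m → ℕ))))

/-- The vertex set of `X`: the elements `x ∈ X` with `x ∉ N(X \ {x})`. -/
def vert {m : ℕ} (X : Set (Fin m → ℕ)) : Set (Fin m → ℕ) :=
  {x ∈ X | emb x ∉ newton (X \ {x})}

open Set

section OrderedModule

variable {E : Type*} [AddCommGroup E] [PartialOrder E] [IsOrderedAddMonoid E] [Module ℝ E]
  [PosSMulMono ℝ E]

theorem self_mem_extremePoints_Ici (p : E) : p ∈ (Ici p).extremePoints ℝ := by
  refine mem_extremePoints_iff_left.2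
    ⟨le_rfl, fun q₁ hq₁ q₂ hq₂ ⟨a, b, ha, hb, hab, hp⟩ => ?_⟩
  have hsum : a • (q₁ - p) + b • (q₂ - p) = 0 := by
    rw [smul_sub, smul_sub, sub_add_sub_comm, hp, ← add_smul, hab, one_smul, sub_self]
  have h₁ := ((add_eq_zero_iff_of_nonneg (smul_nonneg ha.le (sub_nonneg.2 hq₁))
    (smul_nonneg hb.le (sub_nonneg.2 hq₂))).1 hsum).1
  rw [smul_eq_zero_iff_right ha.ne'] at h₁
  exact sub_eq_zero.1 h₁

theorem mem_extremePoints_convexHull_union_Ici {C : Set E} {p : E} (hC : Convex ℝ C)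
    (hCu : IsUpperSet C) (hp : p ∉ C) : p ∈ (convexHull ℝ (C ∪ Ici p)).extremePoints ℝ := by
  rcases C.eq_empty_or_nonempty with rfl | hCne
  · simpa [(convex_Ici p).convexHull_eq] using self_mem_extremePoints_Ici p
  rw [hC.convexHull_union (convex_Ici p) hCne nonempty_Ici]
  refine mem_extremePoints_iff_left.2 ⟨subset_convexJoin_right hCne (mem_Ici.2 le_rfl),
    fun q₁ hq₁ q₂ hq₂ hpq => ?_⟩
  obtain ⟨c₁, hc₁, d₁, hd₁, u₁, t₁, hu₁, ht₁, hut₁, rfl⟩ := mem_convexJoin.1 hq₁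
  obtain ⟨c₂, hc₂, d₂, hd₂, u₂, t₂, hu₂, ht₂, hut₂, rfl⟩ := mem_convexJoin.1 hq₂
  obtain ⟨a, b, ha, hb, hab, hpab⟩ := id hpq
  by_cases ht : t₁ = 1 ∧ t₂ = 1
  · obtain ⟨rfl, rfl⟩ := ht
    obtain rfl : u₁ = 0 := by linarith
    obtain rfl : u₂ = 0 := by linarith
    simp only [zero_smul, one_smul, zero_add] at hpq ⊢
    exact (mem_extremePoints_iff_left.1 (self_mem_extremePoints_Ici p)).2 d₁ hd₁ d₂ hd₂ hpq
  -- otherwise the `C`-parts of `q₁` and `q₂` combine to a point `z ∈ C` below `p`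
  exfalso
  set s := 1 - (a * t₁ + b * t₂) with hs_def
  have hs : 0 < s := by
    by_contra! hs
    exact ht ⟨by nlinarith, by nlinarith⟩
  set z := (a * u₁ / s) • c₁ + (b * u₂ / s) • c₂ with hz_def
  have hzC : z ∈ C := hC hc₁ hc₂ (by positivity) (by positivity) (by
    rw [← add_div, div_eq_one_iff_eq hs.ne']
    linear_combination a * hut₁ + b * hut₂ + hab)
  have hsz : s • z = (a * u₁) • c₁ + (b * u₂) • c₂ := by
    rw [hz_def, smul_add, smul_smul, smul_smul, mul_div_cancel₀ _ hs.ne',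
      mul_div_cancel₀ _ hs.ne']
  have hspz : s • (p - z) = (a * t₁) • (d₁ - p) + (b * t₂) • (d₂ - p) := by
    rw [smul_sub, hsz, hs_def]
    linear_combination (norm := module) -hpab
  have hzp : z ≤ p := by
    rw [← sub_nonneg, ← inv_smul_smul₀ hs.ne' (p - z), hspz]
    exact smul_nonneg (inv_nonneg.2 hs.le) (add_nonneg
      (smul_nonneg (by positivity) (sub_nonneg.2 hd₁))
      (smul_nonneg (by positivity) (sub_nonneg.2 hd₂)))
  exact hp (hCu hzp hzC)

end OrderedModule

variable {m : ℕ} {S T X : Set (Fin m → ℕ)} {x y : Fin m → ℕ}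

lemma emb_eq_compLeft :
    (emb : (Fin m → ℕ) → Fin m → ℝ) = (Nat.castAddMonoidHom ℝ).compLeft (Fin m) :=
  rfl

lemma emb_injective : Function.Injective (emb (m := m)) :=
  fun _ _ h => funext fun i => Nat.cast_injective (congrFun h i)

lemma image_emb_add (S T : Set (Fin m → ℕ)) : emb '' (S + T) = emb '' S + emb '' T := by
  rw [emb_eq_compLeft]; exact Set.image_add _

lemma convexHull_range_natCast : convexHull ℝ (range ((↑) : ℕ → ℝ)) = Ici 0 := by
  refine (convexHull_min (range_subset_iff.2 fun n => mem_Ici.2 n.cast_nonneg)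
    (convex_Ici 0)).antisymm fun x (hx : 0 ≤ x) =>
      segment_subset_convexHull (mem_range_self ⌊x⌋₊) (mem_range_self (⌊x⌋₊ + 1)) ?_
  rw [segment_eq_Icc (by simp)]
  exact ⟨Nat.floor_le hx, by exact_mod_cast (Nat.lt_floor_add_one x).le⟩

lemma convexHull_range_emb : convexHull ℝ (range (emb (m := m))) = Ici 0 := by
  change convexHull ℝ (range (Pi.map fun _ : Fin m => ((↑) : ℕ → ℝ))) = _
  rw [range_piMap, convexHull_pi]
  simp only [convexHull_range_natCast]
  exact pi_univ_Ici 0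

lemma newton_eq_convexHull_add_Ici (T : Set (Fin m → ℕ)) :
    newton T = convexHull ℝ (emb '' T) + Ici 0 := by
  rw [newton, image_emb_add, convexHull_add, image_univ, convexHull_range_emb]

lemma newton_singleton (x : Fin m → ℕ) : newton {x} = Ici (emb x) := by
  rw [newton_eq_convexHull_add_Ici, image_singleton, convexHull_singleton, singleton_add,
    image_const_add_Ici, add_zero]

lemma isUpperSet_newton (T : Set (Fin m → ℕ)) : IsUpperSet (newton T) := by
  rw [newton_eq_convexHull_add_Ici]
  rintro _ q hpq ⟨c, hc, r, hr, rfl⟩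
  exact ⟨c, hc, q - c, sub_nonneg.2 ((le_add_of_nonneg_right hr).trans hpq), add_sub_cancel c q⟩

lemma newton_mono (h : S ⊆ T) : newton S ⊆ newton T :=
  convexHull_mono (image_mono (add_subset_add_right h))

lemma newton_union (S T : Set (Fin m → ℕ)) :
    newton (S ∪ T) = convexHull ℝ (newton S ∪ newton T) := by
  rw [newton, newton, newton, union_add, image_union, convexHull_convexHull_union_left,
    convexHull_convexHull_union_right]

lemma newton_union_singleton (T : Set (Fin m → ℕ)) (x : Fin m → ℕ) :
    newton (T ∪ {x}) = convexHull ℝ (newton T ∪ Ici (emb x)) := by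
  rw [newton_union, newton_singleton]

lemma newton_union_singleton_of_mem (hx : emb x ∈ newton T) : newton (T ∪ {x}) = newton T := by
  rw [newton_union_singleton, union_eq_left.2 ((isUpperSet_newton T).Ici_subset hx)]
  exact (convex_convexHull ℝ _).convexHull_eq

lemma emb_add_mem_newton (hy : y ∈ S) (u : Fin m → ℕ) :
    emb (y + u) ∈ newton S :=
  subset_convexHull ℝ _ ⟨y + u, add_mem_add hy (mem_univ u), rfl⟩

lemma newton_subset_newton_of_forall_le (h : ∀ y ∈ T, ∃ z ∈ S, z ≤ y) :
    newton T ⊆ newton S := by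
  refine convexHull_min ?_ (convex_convexHull ℝ _)
  rintro _ ⟨_, ⟨y, hy, u, -, rfl⟩, rfl⟩
  obtain ⟨z, hz, hzy⟩ := h y hy
  show emb (y + u) ∈ _
  rw [← add_tsub_cancel_of_le hzy, add_assoc]
  exact emb_add_mem_newton hz _

lemma exists_finset_subset_newton_eq (X : Set (Fin m → ℕ)) :
    ∃ S : Finset (Fin m → ℕ), ↑S ⊆ X ∧ newton ↑S = newton X := by
  have hfin : {x | Minimal (· ∈ X) x}.Finite :=
    WellQuasiOrderedLE.finite_of_isAntichain (setOfPred_minimal_antichain _)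
  refine ⟨hfin.toFinset, fun x hx => (hfin.mem_toFinset.1 hx).prop,
    (newton_mono fun x hx => (hfin.mem_toFinset.1 hx).prop).antisymm
      (newton_subset_newton_of_forall_le fun y hy => ?_)⟩
  obtain ⟨z, hzy, hz⟩ := exists_minimal_le_of_wellFoundedLT _ y hy
  exact ⟨z, hfin.mem_toFinset.2 hz, hzy⟩

lemma emb_mem_extremePoints_newton_of_mem_vert (hx : x ∈ vert X) :
    emb x ∈ (newton X).extremePoints ℝ := by
  rw [← sdiff_union_of_subset (singleton_subset_iff.2 hx.1), newton_union_singleton]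
  exact mem_extremePoints_convexHull_union_Ici (convex_convexHull ℝ _) (isUpperSet_newton _) hx.2

lemma mem_vert_of_emb_mem_extremePoints_newton (hxX : x ∈ X)
    (hx : emb x ∈ (newton X).extremePoints ℝ) : x ∈ vert X := by
  refine ⟨hxX, fun hxN => ?_⟩
  have hx' : emb x ∈ (newton (X \ {x})).extremePoints ℝ :=
    inter_extremePoints_subset_extremePoints_of_subset (newton_mono sdiff_subset) ⟨hxN, hx⟩
  obtain ⟨_, ⟨y, ⟨hyX, hyx⟩, u, -, rfl⟩, hyu⟩ := extremePoints_convexHull_subset hx'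
  have hmid : emb x ∈ openSegment ℝ (emb y) (emb (y + 2 • u)) := by
    refine ⟨1 / 2, 1 / 2, by norm_num, by norm_num, by norm_num, ?_⟩
    rw [← hyu]
    funext i
    simp only [emb, Pi.add_apply, Pi.smul_apply, smul_eq_mul, Nat.cast_add, Nat.cast_mul]
    push_cast
    ring
  have hy : emb y ∈ newton X := by simpa using emb_add_mem_newton hyX 0
  exact hyx (emb_injective ((mem_extremePoints.1 hx).2 _ hy _ (emb_add_mem_newton hyX _) hmid).1)

theorem mem_vert_iff :
    x ∈ vert X ↔ x ∈ X ∧ emb x ∈ (newton X).extremePoints ℝ :=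
  ⟨fun hx => ⟨hx.1, emb_mem_extremePoints_newton_of_mem_vert hx⟩,
    fun hx => mem_vert_of_emb_mem_extremePoints_newton hx.1 hx.2⟩

theorem newton_vert_eq_newton_general (m : ℕ) (X : Set (Fin m → ℕ)) :
    newton (vert X) = newton X := by
  obtain ⟨S, ⟨hSX, hSN⟩, hSmin⟩ := exists_minimal_of_wellFoundedLT
    (fun S : Finset (Fin m → ℕ) => ↑S ⊆ X ∧ newton ↑S = newton X)
    (exists_finset_subset_newton_eq X)
  -- a point of `S` that is not a vertex of `S` could be dropped from `S`
  have hS : ∀ x ∈ S, x ∈ vert (S : Set (Fin m → ℕ)) := fun x hx => by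
    refine ⟨hx, fun hxN => Finset.notMem_erase x S
      (hSmin ⟨fun y hy => hSX (Finset.mem_of_mem_erase hy), ?_⟩ (Finset.erase_subset x S) hx)⟩
    rw [Finset.coe_erase, ← newton_union_singleton_of_mem hxN,
      sdiff_union_of_subset (singleton_subset_iff.2 hx), hSN]
  have hSvert : ↑S ⊆ vert X := fun x hx =>
    mem_vert_iff.2 ⟨hSX hx, hSN ▸ (mem_vert_iff.1 (hS x hx)).2⟩
  exact (newton_mono fun x hx => hx.1).antisymm (hSN ▸ newton_mono hSvert)

theorem newton_vert_eq_newton (m : ℕ) (hm : 1 ≤ m) (X : Set (Fin m → ℕ)) :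
    newton (vert X) = newton X :=
  newton_vert_eq_newton_general m X

end
end

section
/- Let K be an uncountable algebraically closed field. Let (F_ℓ)_{ℓ∈ℕ} be a sequence of polynomials in the polynomial ring K[x_j : j ∈ ℕ] in countably many variables, and let S ⊆ ℕ. Suppose that for every n ∈ ℕ there exists an assignment a : ℕ → K such that F_ℓ(a) = 0 for all ℓ ≤ n and, for all j ≤ n, a_j = 0 if and only if j ∉ S. Then there exists an assignment a : ℕ → K such that F_ℓ(a) = 0 for all ℓ ∈ ℕ and, for all j ∈ ℕ, a_j = 0 if and only if j ∉ S. -/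
/-!
Adjoining an inverse `y_j` for every variable `x_j` that must not vanish (Rabinowitsch's trick)
turns the zero pattern into polynomial equations `x_j y_j = 1` and `x_j = 0`. Each finite part of
the resulting system has a solution, so the equations generate a proper ideal. Over an
uncountable algebraically closed field `K`, every residue field of a polynomial ring in countably
many variables has countable `K`-dimension, so it is algebraic over `K` and hence equal to `K`:
a maximal ideal containing the system gives a common zero.
-/

open MvPolynomial Cardinal

universe u v

theorem Algebra.IsAlgebraic.of_rank_le_aleph0 (K : Type u) (L : Type v) [Field K] [Uncountable K]
    [Field L] [Algebra K L] (hrank : Module.rank K L ≤ ℵ₀) : Algebra.IsAlgebraic K L := by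
  refine ⟨fun x => not_not.1 fun hx => ?_⟩
  have hK : lift.{v} #K ≤ lift.{u} ℵ₀ :=
    (Transcendental.linearIndependent_sub_inv hx).cardinal_lift_le_rank.trans (lift_le.2 hrank)
  rw [lift_aleph0, lift_le_aleph0] at hK
  exact hK.not_gt aleph0_lt_mk

namespace MvPolynomial

variable {σ ι K : Type*} [Field K]

section Nullstellensatz

variable [IsAlgClosed K] [Uncountable K] [Countable σ]

theorem exists_forall_eval_eq_zero_of_ne_top {I : Ideal (MvPolynomial σ K)} (hI : I ≠ ⊤) :
    ∃ x : σ → K, ∀ p ∈ I, eval x p = 0 := by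
  obtain ⟨m, hm, hIm⟩ := Ideal.exists_le_maximal I hI
  let := Ideal.Quotient.field m
  have hrank : Module.rank K (MvPolynomial σ K ⧸ m) ≤ ℵ₀ :=
    (rank_quotient_le (m.restrictScalars K)).trans <| by
      rw [MvPolynomial.rank_eq_lift]
      simp
  have := Algebra.IsAlgebraic.of_rank_le_aleph0 K _ hrank
  let e : K ≃ₐ[K] MvPolynomial σ K ⧸ m :=
    .ofBijective (Algebra.ofId K _) IsAlgClosed.algebraMap_bijective_of_isIntegral
  let ψ : MvPolynomial σ K →ₐ[K] K := (e.symm : _ →ₐ[K] K).comp (Ideal.Quotient.mkₐ K m)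
  refine ⟨ψ ∘ X, fun p hp => ?_⟩
  have hψ : ψ p = 0 := by
    simp [ψ, Ideal.Quotient.mkₐ_eq_mk, Ideal.Quotient.eq_zero_iff_mem.2 (hIm hp)]
  rwa [aeval_unique ψ] at hψ

theorem exists_forall_eval_eq_zero_of_forall_finset (g : ι → MvPolynomial σ K)
    (h : ∀ t : Finset ι, ∃ x : σ → K, ∀ i ∈ t, eval x (g i) = 0) :
    ∃ x : σ → K, ∀ i, eval x (g i) = 0 := by
  have hI : Ideal.span (Set.range g) ≠ ⊤ := by
    rw [Ne, Ideal.eq_top_iff_one, Finsupp.mem_ideal_span_range_iff_exists_finsupp]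
    rintro ⟨c, hc⟩
    obtain ⟨x, hx⟩ := h c.support
    have hsum : eval x (c.sum fun i a => a * g i) = 0 := by
      rw [Finsupp.sum, map_sum]
      exact Finset.sum_eq_zero fun i hi => by simp [hx i hi]
    simp [hc] at hsum
  obtain ⟨x, hx⟩ := exists_forall_eval_eq_zero_of_ne_top hI
  exact ⟨x, fun i => hx _ (Ideal.subset_span ⟨i, rfl⟩)⟩

end Nullstellensatz

section ZeroPattern

open Classical in
/-- The variable `inr j` stands for the inverse of `inl j` when `j ∈ S`. -/
noncomputable def zeroPatternSystem (F : ι → MvPolynomial σ K) (S : Set σ) :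
    ι ⊕ σ → MvPolynomial (σ ⊕ σ) K :=
  Sum.elim (fun ℓ => rename Sum.inl (F ℓ))
    (fun j => if j ∈ S then X (.inl j) * X (.inr j) - 1 else X (.inl j))

variable (F : ι → MvPolynomial σ K) (S : Set σ)

theorem eval_zeroPatternSystem_inl (b : σ ⊕ σ → K) (ℓ : ι) :
    eval b (zeroPatternSystem F S (.inl ℓ)) = eval (b ∘ .inl) (F ℓ) := by
  simp [zeroPatternSystem, eval_rename]

theorem eval_zeroPatternSystem_inr_elim_inv {a : σ → K} {j : σ} (hj : a j = 0 ↔ j ∉ S) :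
    eval (Sum.elim a (a ·)⁻¹) (zeroPatternSystem F S (.inr j)) = 0 := by
  by_cases hjS : j ∈ S
  · have hne : a j ≠ 0 := fun h0 => hj.1 h0 hjS
    simp [zeroPatternSystem, hjS, hne]
  · simp [zeroPatternSystem, hjS, hj.2 hjS]

theorem zero_pattern_of_eval_zeroPatternSystem_inr {b : σ ⊕ σ → K} {j : σ}
    (hb : eval b (zeroPatternSystem F S (.inr j)) = 0) : b (.inl j) = 0 ↔ j ∉ S := by
  by_cases hjS : j ∈ S
  · simp only [zeroPatternSystem, Sum.elim_inr, if_pos hjS, map_sub, map_mul, eval_X, map_one,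
      sub_eq_zero] at hb
    exact iff_of_false (left_ne_zero_of_mul_eq_one hb) (not_not.2 hjS)
  · simpa [zeroPatternSystem, hjS] using hb

theorem exists_forall_eval_eq_zero_and_zero_pattern [IsAlgClosed K] [Uncountable K] [Countable σ]
    (h : ∀ (T : Finset ι) (V : Finset σ), ∃ a : σ → K,
      (∀ ℓ ∈ T, eval a (F ℓ) = 0) ∧ ∀ j ∈ V, (a j = 0 ↔ j ∉ S)) :
    ∃ a : σ → K, (∀ ℓ, eval a (F ℓ) = 0) ∧ ∀ j, (a j = 0 ↔ j ∉ S) := by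
  obtain ⟨b, hb⟩ := exists_forall_eval_eq_zero_of_forall_finset (zeroPatternSystem F S) fun t => by
    obtain ⟨a, hT, hV⟩ := h t.toLeft t.toRight
    refine ⟨Sum.elim a (a ·)⁻¹, ?_⟩
    rintro (ℓ | j) hi
    · rw [eval_zeroPatternSystem_inl]
      exact hT ℓ (Finset.mem_toLeft.2 hi)
    · exact eval_zeroPatternSystem_inr_elim_inv F S (hV j (Finset.mem_toRight.2 hi))
  refine ⟨b ∘ .inl, fun ℓ => ?_, fun j => zero_pattern_of_eval_zeroPatternSystem_inr F S (hb _)⟩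
  rw [← eval_zeroPatternSystem_inl F S]
  exact hb _

end ZeroPattern

end MvPolynomial

/-- If a system of countably many polynomial equations in countably many
variables over an uncountable algebraically closed field admits, for every `n`,
an assignment satisfying the first `n` equations and having the prescribed
zero-pattern on the first `n` variables, then it admits an assignment satisfying
all equations and having the prescribed zero-pattern everywhere. -/
theorem finite_approximation
    (K : Type) [Field K] [IsAlgClosed K] [Uncountable K]
    (F : ℕ → MvPolynomial ℕ K) (S : Set ℕ)
    (h : ∀ n : ℕ, ∃ a : ℕ → K,
      (∀ ℓ ≤ n, MvPolynomial.eval a (F ℓ) = 0) ∧ (∀ j ≤ n, a j = 0 ↔ j ∉ S)) :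
    ∃ a : ℕ → K,
      (∀ ℓ : ℕ, MvPolynomial.eval a (F ℓ) = 0) ∧ (∀ j : ℕ, a j = 0 ↔ j ∉ S) := by
  refine exists_forall_eval_eq_zero_and_zero_pattern F S fun T V => ?_
  obtain ⟨a, hF, hS⟩ := h (max (T.sup id) (V.sup id))
  exact ⟨a, fun ℓ hℓ => hF ℓ (le_max_of_le_left (T.le_sup (f := id) hℓ)),
    fun j hj => hS j (le_max_of_le_right (V.le_sup (f := id) hj))⟩
end
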